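/- arXiv:2502.08855 — 3 statements merged into one kernel-verified Lean document; each statement's English description precedes it below -/
import Mathlib

section
/- Let W ≥ 1 and let S : ℤ → ℝ be nonnegative with S(t) = 0 for t ≤ 0. Define X(t) = ∑_{t'=t-W+1}^{t} S(t'). Then for every t, W·(X(t) - X(t-1)) ≤ ∑_{t'=t}^{t+W-1} X(t'). -/
theorem stmt3 (W : ℤ) (hW : 1 ≤ W)
    (S : ℤ → ℝ) (hSnn : ∀ t, 0 ≤ S t) (hS0 : ∀ t ≤ 0, S t = 0)
    (X : ℤ → ℝ) (hX : ∀ t, X t = ∑ t' ∈ Finset.Icc (t - W + 1) t, S t') :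
    ∀ t : ℤ, (W : ℝ) * (X t - X (t - 1)) ≤ ∑ t' ∈ Finset.Icc t (t + W - 1), X t' := by
  intro t
  -- Step 1 : X t ≤ X (t-1) + S t
  have h1 : X t ≤ X (t - 1) + S t := by
    rw [hX, hX]
    have hins : Finset.Icc (t - W + 1) t = insert t (Finset.Icc (t - W + 1) (t - 1)) := by
      ext x; simp only [Finset.mem_insert, Finset.mem_Icc]; omega
    rw [hins, Finset.sum_insert (by simp only [Finset.mem_Icc]; omega)]
    have hsub : Finset.Icc (t - W + 1) (t - 1) ⊆ Finset.Icc (t - 1 - W + 1) (t - 1) :=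
      Finset.Icc_subset_Icc (by omega) le_rfl
    have := Finset.sum_le_sum_of_subset_of_nonneg hsub (fun i _ _ => hSnn i)
    linarith
  -- Step 2 : W * S t ≤ RHS
  have h2 : (W : ℝ) * S t ≤ ∑ t' ∈ Finset.Icc t (t + W - 1), X t' := by
    have hcard : (Finset.Icc t (t + W - 1)).card = W.toNat := by
      rw [Int.card_Icc]; omega
    have hconst : ∑ _t' ∈ Finset.Icc t (t + W - 1), S t = (W : ℝ) * S t := by
      rw [Finset.sum_const, hcard, nsmul_eq_mul]
      congr 1
      exact_mod_cast Int.toNat_of_nonneg (by omega)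
    rw [← hconst]
    apply Finset.sum_le_sum
    intro i hi
    simp only [Finset.mem_Icc] at hi
    rw [hX]
    have hmem : t ∈ Finset.Icc (i - W + 1) i := by
      simp only [Finset.mem_Icc]; omega
    exact Finset.single_le_sum (fun j _ => hSnn j) hmem
  have hWnn : (0 : ℝ) ≤ (W : ℝ) := by exact_mod_cast (by omega : (0:ℤ) ≤ W)
  have : (W : ℝ) * (X t - X (t - 1)) ≤ (W : ℝ) * S t := by
    apply mul_le_mul_of_nonneg_left _ hWnn
    linarith
  linarith
end

section
/- There exist functions X, S : ℤ → ℝ witnessing that Formulation 1 is not as tight as Formulation 7. Concretely, with n = 4 and W = 2, define X on {1,2,3,4} by X = (1/3, 2/3, 2/3, 1/3) and S by S = (2/3, 1/3, 0, 0), extended by 0 elsewhere. Then: (i) 0 ≤ X(t) ≤ 1 and 0 ≤ S(t) ≤ 1 for all t; (ii) ∑_{t=1}^{4} X(t) = 2; (iii) ∑_{t=1}^{4} S(t) = 1; (iv) X(t) - X(t-1) ≤ S(t) for all t ∈ {1,2,3,4}; but (v) there exists t ∈ {1,2,3,4} with X(t) ≠ ∑_{t'=t-1}^{t} S(t'). 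-/
noncomputable def X4 : ℤ → ℝ := fun t =>
  if t = 1 then 1/3 else if t = 2 then 2/3 else if t = 3 then 2/3 else if t = 4 then 1/3 else 0

noncomputable def S4 : ℤ → ℝ := fun t =>
  if t = 1 then 2/3 else if t = 2 then 1/3 else 0

theorem stmt4 :
    (∀ t : ℤ, 0 ≤ X4 t ∧ X4 t ≤ 1) ∧
    (∀ t : ℤ, 0 ≤ S4 t ∧ S4 t ≤ 1) ∧
    (∑ t ∈ Finset.Icc (1 : ℤ) 4, X4 t = 2) ∧
    (∑ t ∈ Finset.Icc (1 : ℤ) 4, S4 t = 1) ∧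
    (∀ t ∈ Finset.Icc (1 : ℤ) 4, X4 t - X4 (t - 1) ≤ S4 t) ∧
    (∃ t ∈ Finset.Icc (1 : ℤ) 4, X4 t ≠ ∑ t' ∈ Finset.Icc (t - 1) t, S4 t') := by
  refine ⟨?_, ?_, ?_, ?_, ?_, ?_⟩
  · intro t; unfold X4; split_ifs <;> norm_num
  · intro t; unfold S4; split_ifs <;> norm_num
  · have h : Finset.Icc (1:ℤ) 4 = {1,2,3,4} := by decide
    rw [h]; unfold X4; norm_num
  · have h : Finset.Icc (1:ℤ) 4 = {1,2,3,4} := by decide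
    rw [h]; unfold S4; norm_num
  · intro t ht
    simp only [Finset.mem_Icc] at ht
    obtain ⟨h1,h2⟩ := ht
    interval_cases t <;> (unfold X4 S4; norm_num)
  · refine ⟨3, by decide, ?_⟩
    have h : Finset.Icc (2:ℤ) 3 = {2,3} := by decide
    norm_num [h]; unfold X4 S4; norm_num
end

section
/- Let n ≥ 1, W ≥ 1 with W ≤ n. Suppose X, S : ℤ → ℝ are nonnegative, S(t) = 0 for t ≤ 0 and t > n, ∑_{t=1}^{n} X(t) = W, ∑_{t=1}^{n} S(t) = 1, and for every t ∈ {1,...,n}, ∑_{t'=t-W+1}^{t} S(t') ≥ X(t). Suppose further S(t) = 0 for t > n - W + 1 (so that each window {t,...,t+W-1} for t with S(t) possibly nonzero lies within {1,...,n}). Then for every t ∈ {1,...,n}, ∑_{t'=t-W+1}^{t} S(t') = X(t). -/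
theorem stmt7 (n W : ℤ) (hn : 1 ≤ n) (hW : 1 ≤ W) (hWn : W ≤ n)
    (X S : ℤ → ℝ) (hXnn : ∀ t, 0 ≤ X t) (hSnn : ∀ t, 0 ≤ S t)
    (hS0 : ∀ t ≤ 0, S t = 0) (hSn : ∀ t, n < t → S t = 0)
    (hXsum : ∑ t ∈ Finset.Icc (1 : ℤ) n, X t = W)
    (hSsum : ∑ t ∈ Finset.Icc (1 : ℤ) n, S t = 1)
    (hlink : ∀ t ∈ Finset.Icc (1 : ℤ) n, X t ≤ ∑ t' ∈ Finset.Icc (t - W + 1) t, S t')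
    (hSend : ∀ t, n - W + 1 < t → S t = 0) :
    ∀ t ∈ Finset.Icc (1 : ℤ) n, ∑ t' ∈ Finset.Icc (t - W + 1) t, S t' = X t := by
  classical
  -- Step 1: total of the window sums equals W.
  have hwin : ∀ t ∈ Finset.Icc (1 : ℤ) n,
      ∑ t' ∈ Finset.Icc (t - W + 1) t, S t'
        = ∑ t' ∈ Finset.Icc (1 : ℤ) n, (if t' ∈ Finset.Icc (t - W + 1) t then S t' else 0) := by
    intro t ht
    rw [Finset.sum_ite_mem (Finset.Icc (1 : ℤ) n) (Finset.Icc (t - W + 1) t) S]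
    symm
    apply Finset.sum_subset Finset.inter_subset_right
    intro x hx hx'
    simp only [Finset.mem_inter, Finset.mem_Icc] at hx hx'
    have hxn : x ≤ n := le_trans hx.2 (Finset.mem_Icc.mp ht).2
    have : x < 1 := by
      by_contra h
      push_neg at h
      exact hx' ⟨⟨h, hxn⟩, hx⟩
    exact hS0 x (by omega)
  have htotal : ∑ t ∈ Finset.Icc (1 : ℤ) n, ∑ t' ∈ Finset.Icc (t - W + 1) t, S t' = W := by
    rw [Finset.sum_congr rfl hwin, Finset.sum_comm]
    have hinner : ∀ t' ∈ Finset.Icc (1 : ℤ) n,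
        ∑ t ∈ Finset.Icc (1 : ℤ) n, (if t' ∈ Finset.Icc (t - W + 1) t then S t' else 0)
          = (W : ℝ) * S t' := by
      intro t' ht'
      by_cases hz : S t' = 0
      · rw [hz, mul_zero]
        apply Finset.sum_eq_zero
        intro x _
        simp [hz]
      · have h1 : 1 ≤ t' := (Finset.mem_Icc.mp ht').1
        have h2 : t' ≤ n - W + 1 := by
          by_contra h
          exact hz (hSend t' (by omega))
        have hcong : ∀ t ∈ Finset.Icc (1 : ℤ) n,
            (if t' ∈ Finset.Icc (t - W + 1) t then S t' else 0)
              = (if t ∈ Finset.Icc t' (t' + W - 1) then S t' else 0) := by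
          intro t _
          have hiff : (t - W + 1 ≤ t' ∧ t' ≤ t) ↔ (t' ≤ t ∧ t ≤ t' + W - 1) := by omega
          simp only [Finset.mem_Icc, hiff]
        rw [Finset.sum_congr rfl hcong, Finset.sum_ite_mem]
        have hsub : Finset.Icc t' (t' + W - 1) ⊆ Finset.Icc (1 : ℤ) n := by
          intro x hx
          simp only [Finset.mem_Icc] at hx ⊢
          omega
        rw [Finset.inter_eq_right.mpr hsub, Finset.sum_const, Int.card_Icc]
        have hcard : (t' + W - 1 + 1 - t').toNat = W.toNat := by omega
        rw [hcard, nsmul_eq_mul]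
        congr 1
        exact_mod_cast Int.toNat_of_nonneg (by omega : (0:ℤ) ≤ W)
    rw [Finset.sum_congr rfl hinner, ← Finset.mul_sum, hSsum, mul_one]
  -- Step 2: sum of slacks is zero, each slack nonneg.
  have hslack : ∑ t ∈ Finset.Icc (1 : ℤ) n,
      ((∑ t' ∈ Finset.Icc (t - W + 1) t, S t') - X t) = 0 := by
    rw [Finset.sum_sub_distrib, htotal, hXsum, sub_self]
  have hzero := (Finset.sum_eq_zero_iff_of_nonneg
    (fun t ht => sub_nonneg.mpr (hlink t ht))).mp hslack
  intro t ht
  have := hzero t ht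
  linarith [this]
end
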